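/- arXiv:1606.05449 — 5 statements merged into one kernel-verified Lean document; each statement's English description precedes it below -/
import Mathlib

section
/- Let V be a compact metric space and g : V → V an open continuous surjection. Suppose there exist constants β > 0, K ∈ ℕ₊, and γ ∈ (0,1) such that for all v, w ∈ V with d(v,w) < β one has d(g^K(v), g^K(w)) ≤ γ^K · d(g^{2K}(v), g^{2K}(w)) (Wieler's Axiom 1). Then g^K is locally expanding with constant γ^{-K}: there exists δ > 0 such that d(v,w) < δ implies d(g^K(v), g^K(w)) ≥ γ^{-K} · d(v,w). -/
/-- Wieler's Axiom 1 plus openness implies `g^[K]` is locally expanding with constant `γ^{-K}`. -/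
theorem stmt0 {V : Type*} [MetricSpace V] [CompactSpace V]
    (g : V → V) (hcont : Continuous g) (hopen : IsOpenMap g)
    (hsurj : Function.Surjective g)
    (β γ : ℝ) (K : ℕ) (hβ : 0 < β) (hK : 0 < K) (hγ0 : 0 < γ) (hγ1 : γ < 1)
    (ax1 : ∀ v w : V, dist v w < β →
      dist (g^[K] v) (g^[K] w) ≤ γ ^ K * dist (g^[2 * K] v) (g^[2 * K] w)) :
    ∃ δ > 0, ∀ v w : V, dist v w < δ →
      (γ ^ K)⁻¹ * dist v w ≤ dist (g^[K] v) (g^[K] w) := by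
  set f : V → V := g^[K] with hf
  have hfopen : IsOpenMap f := by
    have : ∀ n : ℕ, IsOpenMap (g^[n]) := by
      intro n
      induction n with
      | zero => simpa using IsOpenMap.id
      | succ n ih => rw [Function.iterate_succ']; exact hopen.comp ih
    exact this K
  have hfsurj : Function.Surjective f := Function.Surjective.iterate hsurj K
  -- open cover by images of small balls
  have hcover : Set.univ ⊆ ⋃ x : V, f '' Metric.ball x (β / 2) := by
    intro y _
    obtain ⟨x, rfl⟩ := hfsurj y
    exact Set.mem_iUnion.2 ⟨x, ⟨x, Metric.mem_ball_self (by linarith), rfl⟩⟩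
  obtain ⟨δ, hδ0, hδ⟩ := lebesgue_number_lemma_of_metric isCompact_univ
    (fun x => hfopen _ Metric.isOpen_ball) hcover
  refine ⟨δ, hδ0, fun v w hvw => ?_⟩
  obtain ⟨x, hx⟩ := hδ v (Set.mem_univ v)
  have hv : v ∈ f '' Metric.ball x (β / 2) := hx (Metric.mem_ball_self hδ0)
  have hw : w ∈ f '' Metric.ball x (β / 2) := hx (by simpa [Metric.mem_ball, dist_comm] using hvw)
  obtain ⟨v', hv', rfl⟩ := hv
  obtain ⟨w', hw', rfl⟩ := hw
  have hdist : dist v' w' < β := by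
    have h1 := Metric.mem_ball.1 hv'
    have h2 := Metric.mem_ball.1 hw'
    calc dist v' w' ≤ dist v' x + dist x w' := dist_triangle _ _ _
      _ < β / 2 + β / 2 := by rw [dist_comm x w'] at *; linarith
      _ = β := by ring
  have key := ax1 v' w' hdist
  have h2K : ∀ z : V, g^[2 * K] z = f (f z) := by
    intro z
    simp [hf, two_mul, Function.iterate_add_apply]
  rw [h2K v', h2K w'] at key
  have hpos : 0 < γ ^ K := pow_pos hγ0 K
  rw [inv_mul_le_iff₀ hpos]
  simpa [hf] using key
end

section
/- Let V be a compact metric space and g : V → V an open continuous surjection satisfying Wieler's Axiom 1 (there exist β > 0, K ∈ ℕ₊, γ ∈ (0,1) with d(v,w) < β implying d(g^K(v), g^K(w)) ≤ γ^K · d(g^{2K}(v), g^{2K}(w))). Then g is a local homeomorphism. -/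
/-!
Put `f = g^[K]`. Axiom 1 forces `f v = f w` whenever `dist v w < β` and `f (f v) = f (f w)`.
Since `f` is a continuous open map on a compact space it is uniformly open: some `δ > 0` has
`ball (f x) δ ⊆ f '' ball x β` for every `x`. Writing two points of a ball of radius `δ / 2`
as `f v` and `f w` with `dist v w < β` (surjectivity) shows that `f` is injective on such balls,
hence so is `g`, because `f` factors through `g`. A continuous open locally injective map is a
local homeomorphism.
-/

open Metric Function

theorem IsLocallyInjective.of_comp {X Y Z : Type*} [TopologicalSpace X] {f : X → Y}
    {h : Y → Z} (hf : IsLocallyInjective (h ∘ f)) : IsLocallyInjective f := fun x ↦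
  let ⟨U, hU, hxU, hinj⟩ := hf x
  ⟨U, hU, hxU, fun _ ha _ hb hab ↦ hinj ha hb (congrArg h hab)⟩

theorem isLocalHomeomorph_of_isLocallyInjective {X Y : Type*} [TopologicalSpace X]
    [TopologicalSpace Y] {f : X → Y} (hc : Continuous f) (ho : IsOpenMap f)
    (hinj : IsLocallyInjective f) : IsLocalHomeomorph f := by
  intro x
  obtain ⟨U, hU, hxU, hinjU⟩ := hinj x
  have : Nonempty X := ⟨x⟩
  exact ⟨.ofContinuousOpen (hinjU.toPartialEquiv f U) hc.continuousOn ho hU, hxU, rfl⟩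

/-- Uniform openness: `(id × f)` maps the open `ε`-neighbourhood of the diagonal to an open
set containing the compact graph of `f`, which therefore contains a uniform thickening of it. -/
theorem IsOpenMap.exists_ball_subset_image_ball {X Y : Type*} [PseudoMetricSpace X]
    [CompactSpace X] [PseudoMetricSpace Y] {f : X → Y} (hc : Continuous f) (ho : IsOpenMap f)
    {ε : ℝ} (hε : 0 < ε) : ∃ δ > 0, ∀ x, ball (f x) δ ⊆ f '' ball x ε := by
  set S : Set (X × Y) := Prod.map id f '' {p | dist p.1 p.2 < ε}
  have hS : IsOpen S :=
    IsOpenMap.id.prodMap ho _ (isOpen_lt continuous_dist continuous_const)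
  have hgraph : Set.range (fun x ↦ (x, f x)) ⊆ S := by
    rintro _ ⟨x, rfl⟩
    exact ⟨(x, x), by simpa using hε, rfl⟩
  obtain ⟨δ, hδ, hthick⟩ :=
    (isCompact_range (continuous_id.prodMk hc)).exists_thickening_subset_open hS hgraph
  refine ⟨δ, hδ, fun x y hy ↦ ?_⟩
  have hxy : (x, y) ∈ S := by
    refine hthick (mem_thickening_iff.mpr ⟨(x, f x), ⟨x, rfl⟩, ?_⟩)
    simpa [Prod.dist_eq, hδ.le] using hy
  obtain ⟨⟨x', y'⟩, hdist, hxy'⟩ := hxy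
  obtain ⟨rfl, rfl⟩ := Prod.mk.inj hxy'
  exact ⟨y', mem_ball'.mpr hdist, rfl⟩

theorem IsOpenMap.iterate {X : Type*} [TopologicalSpace X] {f : X → X} (hf : IsOpenMap f)
    (n : ℕ) : IsOpenMap f^[n] := by
  induction n with
  | zero => exact IsOpenMap.id
  | succ n ih => rw [iterate_succ]; exact ih.comp hf

theorem injOn_ball_of_ball_subset_image_ball {X : Type*} [PseudoMetricSpace X] {f : X → X}
    {β δ : ℝ} (hsurj : Surjective f) (hball : ∀ x, ball (f x) δ ⊆ f '' ball x β)
    (hf : ∀ v w, dist v w < β → f (f v) = f (f w) → f v = f w) (x : X) :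
    (ball x (δ / 2)).InjOn f := by
  intro a ha b hb hab
  obtain ⟨v, rfl⟩ := hsurj a
  have hdist : dist (f v) b < δ := by
    linarith [dist_triangle_right (f v) b x, mem_ball.mp ha, mem_ball.mp hb]
  obtain ⟨w, hvw, rfl⟩ := hball v (mem_ball'.mpr hdist)
  exact hf v w (mem_ball'.mp hvw) hab

theorem stmt1_general {V : Type*} [MetricSpace V] [CompactSpace V]
    (g : V → V) (hcont : Continuous g) (hopen : IsOpenMap g)
    (hsurj : Function.Surjective g)
    (β γ : ℝ) (K : ℕ) (hβ : 0 < β) (hK : 0 < K)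
    (ax1 : ∀ v w : V, dist v w < β →
      dist (g^[K] v) (g^[K] w) ≤ γ ^ K * dist (g^[2 * K] v) (g^[2 * K] w)) :
    IsLocalHomeomorph g := by
  have hfcancel : ∀ v w, dist v w < β → g^[K] (g^[K] v) = g^[K] (g^[K] w) →
      g^[K] v = g^[K] w := by
    intro v w hvw hfvw
    have := ax1 v w hvw
    rw [two_mul, iterate_add_apply, iterate_add_apply, hfvw, dist_self, mul_zero] at this
    exact dist_le_zero.mp this
  obtain ⟨δ, hδ, hball⟩ := (hopen.iterate K).exists_ball_subset_image_ball (hcont.iterate K) hβ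
  have hfinj : IsLocallyInjective g^[K] := fun x ↦
    ⟨_, isOpen_ball, mem_ball_self (by positivity),
      injOn_ball_of_ball_subset_image_ball (hsurj.iterate K) hball hfcancel x⟩
  obtain ⟨n, rfl⟩ := Nat.exists_eq_succ_of_ne_zero hK.ne'
  rw [iterate_succ] at hfinj
  exact isLocalHomeomorph_of_isLocallyInjective hcont hopen hfinj.of_comp

/-- An open continuous surjection on a compact metric space satisfying Wieler's Axiom 1
is a local homeomorphism. -/
theorem stmt1 {V : Type*} [MetricSpace V] [CompactSpace V]
    (g : V → V) (hcont : Continuous g) (hopen : IsOpenMap g)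
    (hsurj : Function.Surjective g)
    (β γ : ℝ) (K : ℕ) (hβ : 0 < β) (hK : 0 < K) (hγ0 : 0 < γ) (hγ1 : γ < 1)
    (ax1 : ∀ v w : V, dist v w < β →
      dist (g^[K] v) (g^[K] w) ≤ γ ^ K * dist (g^[2 * K] v) (g^[2 * K] w)) :
    IsLocalHomeomorph g :=
  stmt1_general g hcont hopen hsurj β γ K hβ hK ax1
end

section
/- Let V be a compact metric space and g : V → V a continuous map. Suppose g^K is locally expanding for some K ∈ ℕ₊ and g satisfies Wieler's Axiom 2: there exist β > 0 and γ ∈ (0,1) such that for all v ∈ V and ε ∈ (0, β], g^K(B(g^K(v), ε)) ⊆ g^{2K}(B(v, γε)). Then g is a local homeomorphism. -/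
/-!
Expansion makes `f = g^[K]` injective at a fixed scale `δ`. Wieler's Axiom 2 gives, for every
`w` near `f v`, a point `v₁` near `v` with `f w = f (f v₁)`; as `w` and `f v₁` are `δ`-close,
injectivity forces `w = f v₁`, so `f` maps balls onto balls of uniform size. The same trick,
applied to `g^[K-1] z` for `z` near `g u`, shows that `g` is uniformly open. A continuous, open,
locally injective map is a local homeomorphism.
-/

open Function Metric

section

variable {X : Type*} [MetricSpace X]

def UniformlyOpen (f : X → X) : Prop :=
  ∀ ρ > (0 : ℝ), ∃ η > (0 : ℝ), ∀ x, ball (f x) η ⊆ f '' ball x ρ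

def WielerAxiom2 (f : X → X) (β γ : ℝ) : Prop :=
  ∀ v, ∀ ε : ℝ, 0 < ε → ε ≤ β → f '' ball (f v) ε ⊆ (f ∘ f) '' ball v (γ * ε)

lemma eq_of_dist_le_dist_map {f : X → X} {δ lam : ℝ} (hlam : 0 < lam)
    (hexp : ∀ x y, dist x y < δ → lam * dist x y ≤ dist (f x) (f y))
    {x y : X} (hxy : dist x y < δ) (h : f x = f y) : x = y := by
  have := hexp x y hxy
  rw [h, dist_self] at this
  exact dist_le_zero.mp (nonpos_of_mul_nonpos_right this hlam)

lemma isLocallyInjective_of_dist_lt {f : X → X} {δ : ℝ} (hδ : 0 < δ)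
    (hinj : ∀ x y, dist x y < δ → f x = f y → x = y) : IsLocallyInjective f := by
  refine fun x ↦ ⟨ball x (δ / 2), isOpen_ball, mem_ball_self (by linarith), ?_⟩
  intro a ha b hb hab
  refine hinj a b ?_ hab
  calc dist a b ≤ dist a x + dist b x := dist_triangle_right a b x
    _ < δ / 2 + δ / 2 := add_lt_add (mem_ball.mp ha) (mem_ball.mp hb)
    _ = δ := add_halves δ

theorem WielerAxiom2.uniformlyOpen {f : X → X} {β γ δ : ℝ} (hax : WielerAxiom2 f β γ)
    (hβ : 0 < β) (hγ : 0 < γ) (hδ : 0 < δ) (hf : UniformContinuous f)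
    (hinj : ∀ x y, dist x y < δ → f x = f y → x = y) : UniformlyOpen f := by
  intro ρ hρ
  obtain ⟨θ, hθ, hfθ⟩ := uniformContinuous_iff.mp hf (δ / 2) (by linarith)
  set ε := min (min β (δ / 2)) (min (θ / γ) (ρ / γ))
  have hε : 0 < ε := by positivity
  have hγε_θ : γ * ε ≤ θ := by
    rw [← le_div_iff₀' hγ]; exact (min_le_right _ _).trans (min_le_left _ _)
  have hγε_ρ : γ * ε ≤ ρ := by
    rw [← le_div_iff₀' hγ]; exact (min_le_right _ _).trans (min_le_right _ _)
  refine ⟨ε, hε, fun v w hw ↦ ?_⟩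
  obtain ⟨v₁, hv₁, hfw⟩ :=
    hax v ε hε ((min_le_left _ _).trans (min_le_left _ _)) ⟨w, hw, rfl⟩
  have hvv₁ : dist (f v₁) (f v) < δ / 2 :=
    hfθ ((mem_ball.mp hv₁).trans_le hγε_θ)
  have hwv₁ : dist w (f v₁) < δ := by
    have : ε ≤ δ / 2 := (min_le_left _ _).trans (min_le_right _ _)
    calc dist w (f v₁) ≤ dist w (f v) + dist (f v₁) (f v) := dist_triangle_right _ _ _
      _ < δ := by linarith [mem_ball.mp hw]
  obtain rfl : w = f v₁ := hinj _ _ hwv₁ hfw.symm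
  exact ⟨v₁, ball_subset_ball hγε_ρ hv₁, rfl⟩

theorem UniformlyOpen.of_comp {g p : X → X} {δ : ℝ} (hopen : UniformlyOpen (p ∘ g))
    (hg : UniformContinuous g) (hp : UniformContinuous p) (hcomm : Function.Commute p g) (hδ : 0 < δ)
    (hinj : ∀ x y, dist x y < δ → p (g x) = p (g y) → x = y) : UniformlyOpen g := by
  intro ρ hρ
  obtain ⟨θ, hθ, hgθ⟩ := uniformContinuous_iff.mp hg (δ / 2) (by linarith)
  obtain ⟨η', hη', hball⟩ := hopen (min ρ θ) (lt_min hρ hθ)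
  obtain ⟨η, hη, hpη⟩ := uniformContinuous_iff.mp hp η' hη'
  refine ⟨min η (δ / 2), lt_min hη (by linarith), fun u z hz ↦ ?_⟩
  rw [mem_ball, lt_min_iff] at hz
  obtain ⟨y, hy, hpy⟩ := hball u (mem_ball.mpr (hpη hz.1))
  rw [mem_ball, lt_min_iff] at hy
  -- `p (g (g y)) = g (p (g y)) = g (p z) = p (g z)`
  have hpgy : p (g (g y)) = p (g z) := by
    rw [hcomm (g y), hcomm z]; exact congrArg g hpy
  have hzgy : dist z (g y) < δ := by
    calc dist z (g y) ≤ dist z (g u) + dist (g y) (g u) := dist_triangle_right _ _ _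
      _ < δ := by linarith [hgθ hy.2]
  obtain rfl : z = g y := hinj _ _ hzgy hpgy.symm
  exact ⟨y, hy.1, rfl⟩

theorem UniformlyOpen.isOpenMap {f : X → X} (hf : UniformlyOpen f) : IsOpenMap f := by
  intro U hU
  rw [isOpen_iff]
  rintro _ ⟨u, hu, rfl⟩
  obtain ⟨ρ, hρ, hρU⟩ := isOpen_iff.mp hU u hu
  obtain ⟨η, hη, hηρ⟩ := hf ρ hρ
  exact ⟨η, hη, (hηρ u).trans (Set.image_mono hρU)⟩

end

theorem IsLocallyInjective.isLocalHomeomorph {Y Z : Type*} [TopologicalSpace Y]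
    [TopologicalSpace Z] {f : Y → Z} (hinj : IsLocallyInjective f) (hf : Continuous f)
    (hopen : IsOpenMap f) : IsLocalHomeomorph f := by
  rw [isLocalHomeomorph_iff_isOpenEmbedding_restrict]
  intro x
  obtain ⟨U, hU, hxU, hinjU⟩ := hinj x
  exact ⟨U, hU.mem_nhds hxU, .of_continuous_injective_isOpenMap (hf.comp continuous_subtype_val)
    hinjU.injective (hopen.domRestrict hU)⟩

theorem stmt2_general {V : Type*} [MetricSpace V] [CompactSpace V]
    (g : V → V) (hcont : Continuous g) (K : ℕ) (hK : 0 < K)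
    (hexp : ∃ δ > (0 : ℝ), ∃ lam > (1 : ℝ), ∀ x y : V, dist x y < δ →
      lam * dist x y ≤ dist (g^[K] x) (g^[K] y))
    (β γ : ℝ) (hβ : 0 < β) (hγ0 : 0 < γ)
    (ax2 : ∀ v : V, ∀ ε : ℝ, 0 < ε → ε ≤ β →
      g^[K] '' Metric.ball (g^[K] v) ε ⊆ g^[2 * K] '' Metric.ball v (γ * ε)) :
    IsLocalHomeomorph g := by
  obtain ⟨δ, hδ, lam, hlam, hexp⟩ := hexp
  have hinj : ∀ x y, dist x y < δ → g^[K] x = g^[K] y → x = y :=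
    fun x y ↦ eq_of_dist_le_dist_map (zero_lt_one.trans hlam) hexp
  have huc (m : ℕ) : UniformContinuous g^[m] :=
    CompactSpace.uniformContinuous_of_continuous (hcont.iterate m)
  have hax : WielerAxiom2 g^[K] β γ := by
    rwa [WielerAxiom2, ← iterate_add, ← two_mul]
  obtain ⟨n, rfl⟩ : ∃ n, K = n + 1 := ⟨K - 1, by omega⟩
  have hopen : UniformlyOpen g := by
    refine UniformlyOpen.of_comp (p := g^[n]) ?_ (huc 1) (huc n) (Function.Commute.self_iterate g n).symm
      hδ hinj
    rw [← iterate_succ]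
    exact hax.uniformlyOpen hβ hγ0 hδ (huc _) hinj
  refine IsLocallyInjective.isLocalHomeomorph ?_ hcont hopen.isOpenMap
  exact isLocallyInjective_of_dist_lt hδ fun x y hxy h ↦
    hinj x y hxy (by rw [iterate_succ_apply, iterate_succ_apply, h])

/-- If `g^K` is locally expanding and `g` satisfies Wieler's Axiom 2, then `g` is a
local homeomorphism. -/
theorem stmt2 {V : Type*} [MetricSpace V] [CompactSpace V]
    (g : V → V) (hcont : Continuous g) (K : ℕ) (hK : 0 < K)
    (hexp : ∃ δ > (0 : ℝ), ∃ lam > (1 : ℝ), ∀ x y : V, dist x y < δ →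
      lam * dist x y ≤ dist (g^[K] x) (g^[K] y))
    (β γ : ℝ) (hβ : 0 < β) (hγ0 : 0 < γ) (hγ1 : γ < 1)
    (ax2 : ∀ v : V, ∀ ε : ℝ, 0 < ε → ε ≤ β →
      g^[K] '' Metric.ball (g^[K] v) ε ⊆ g^[2 * K] '' Metric.ball v (γ * ε)) :
    IsLocalHomeomorph g :=
  stmt2_general g hcont K hK hexp β γ hβ hγ0 ax2
end

section
/- Let V be a compact metric space and g : V → V a surjective map. For N ≥ 0 define V(N,g) := { (v₀, v₁, …, v_N) ∈ V^{N+1} : g(v_i) = v_{i-1} for all 1 ≤ i ≤ N } with the projection π₀^N(v₀,…,v_N) = v₀. Then g is a local homeomorphism if and only if for each N ≥ 0 the projection π₀^N : V(N,g) → V is a finite-to-one covering map. -/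
open Set Topology Function TopologicalSpace

/-!
If `g` is a local homeomorphism, the last coordinate identifies `V(N,g)` with `V` and turns
`π₀^N` into `g^[N]`, a local homeomorphism of a compact Hausdorff space and hence a covering
map with finite fibres. Conversely, a covering map with finite fibres is proper, so `V(1,g)`
is compact; the last coordinate is then a homeomorphism `V(1,g) ≃ₜ V` through which `π₀^1`
becomes `g`.
-/

section CoveringMap

variable {E X : Type*} [TopologicalSpace E] [TopologicalSpace X] {f : E → X}

theorem IsCoveringMap.finite_preimage_singleton [CompactSpace E] [T1Space X]
    (hf : IsCoveringMap f) (x : X) : (f ⁻¹' {x}).Finite :=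
  (isClosed_singleton.preimage hf.continuous).isCompact.finite
    (isDiscrete_iff_discreteTopology.mpr (hf x).discreteTopology_fiber)

theorem IsCoveringMap.isClosedMap_of_finite_preimage_singleton (hf : IsCoveringMap f)
    (hfin : ∀ x, (f ⁻¹' {x}).Finite) : IsClosedMap f := by
  choose _ U hxU hU _ H hH using hf
  have hcover : IsOpenCover fun x => (⟨U x, hU x⟩ : Opens X) :=
    .of_sets hU (eq_univ_of_forall fun x => mem_iUnion.mpr ⟨x, hxU x⟩)
  rw [hcover.isClosedMap_iff_restrictPreimage]
  intro x
  have : Finite (f ⁻¹' {x}) := (hfin x).to_subtype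
  have hfst : (U x).restrictPreimage f = Prod.fst ∘ H x :=
    funext fun e => Subtype.ext (hH x e).symm
  rw [hfst]
  exact isClosedMap_fst_of_compactSpace.comp (H x).isClosedMap

theorem IsCoveringMap.isProperMap_of_finite_preimage_singleton (hf : IsCoveringMap f)
    (hfin : ∀ x, (f ⁻¹' {x}).Finite) : IsProperMap f :=
  isProperMap_iff_isClosedMap_and_compact_fibers.mpr
    ⟨hf.continuous, hf.isClosedMap_of_finite_preimage_singleton hfin, fun x => (hfin x).isCompact⟩

theorem IsCoveringMap.compactSpace_of_finite_preimage_singleton [CompactSpace X]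
    (hf : IsCoveringMap f) (hfin : ∀ x, (f ⁻¹' {x}).Finite) : CompactSpace E :=
  ⟨by simpa using
    (hf.isProperMap_of_finite_preimage_singleton hfin).isCompact_preimage isCompact_univ⟩

end CoveringMap

theorem IsLocalHomeomorph.iterate {X : Type*} [TopologicalSpace X] {g : X → X}
    (hg : IsLocalHomeomorph g) : ∀ n, IsLocalHomeomorph g^[n]
  | 0 => (Homeomorph.refl X).isLocalHomeomorph
  | n + 1 => (hg.iterate n).comp hg

section ChainSpace

variable {V : Type*} (g : V → V) (N : ℕ)

abbrev ChainSpace := {v : Fin (N + 1) → V // ∀ i : Fin N, g (v i.succ) = v i.castSucc}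

variable {g N}

theorem ChainSpace.apply_eq_iterate_last (v : ChainSpace g N) (i : Fin (N + 1)) :
    v.1 i = g^[N - i] (v.1 (Fin.last N)) := by
  induction i using Fin.reverseInduction with
  | last => simp
  | cast i ih =>
    rw [← v.2 i, ih, ← iterate_succ_apply' g]
    congr 2
    simp only [Fin.val_succ, Fin.val_castSucc]
    omega

theorem ChainSpace.zero_eq_iterate_last (v : ChainSpace g N) :
    v.1 0 = g^[N] (v.1 (Fin.last N)) := by
  simpa using v.apply_eq_iterate_last 0

variable (g N)

def ChainSpace.lastEquiv : ChainSpace g N ≃ V where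
  toFun v := v.1 (Fin.last N)
  invFun w := ⟨fun i => g^[N - i] w, fun i => by
    rw [← iterate_succ_apply' g]
    congr 1
    simp only [Fin.val_succ, Fin.val_castSucc]
    omega⟩
  left_inv v := Subtype.ext (funext fun i => (v.apply_eq_iterate_last i).symm)
  right_inv w := by simp

theorem ChainSpace.proj_zero_eq_iterate_comp :
    (fun v : ChainSpace g N => v.1 0) = g^[N] ∘ lastEquiv g N :=
  funext zero_eq_iterate_last

variable [TopologicalSpace V]

theorem ChainSpace.continuous_lastEquiv : Continuous (lastEquiv g N) :=
  (continuous_apply _).comp continuous_subtype_val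

def ChainSpace.lastHomeomorph {g : V → V} (hg : Continuous g) (N : ℕ) : ChainSpace g N ≃ₜ V where
  toEquiv := lastEquiv g N
  continuous_toFun := continuous_lastEquiv g N
  continuous_invFun := (continuous_pi fun _ => hg.iterate _).subtype_mk _

end ChainSpace

open ChainSpace in
theorem stmt3_general {V : Type*} [MetricSpace V] [CompactSpace V]
    (g : V → V) :
    IsLocalHomeomorph g ↔
      ∀ N : ℕ,
        IsCoveringMap
          (fun v : {v : Fin (N + 1) → V // ∀ i : Fin N, g (v i.succ) = v i.castSucc} =>
            v.val 0) ∧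
        ∀ b : V,
          {v : {v : Fin (N + 1) → V // ∀ i : Fin N, g (v i.succ) = v i.castSucc} |
            v.val 0 = b}.Finite := by
  refine ⟨fun hg N => ?_, fun h => ?_⟩
  · let e := lastHomeomorph hg.continuous N
    have : CompactSpace (ChainSpace g N) := e.symm.compactSpace
    have hcov : IsCoveringMap fun v : ChainSpace g N => v.1 0 := by
      rw [proj_zero_eq_iterate_comp]
      exact (isLocalHomeomorph_iff_isCoveringMap.mp (hg.iterate N)).comp_homeomorph e
    exact ⟨hcov, hcov.finite_preimage_singleton⟩
  · obtain ⟨hcov, hfin⟩ := h 1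
    have : CompactSpace (ChainSpace g 1) := hcov.compactSpace_of_finite_preimage_singleton hfin
    let e := (continuous_lastEquiv g 1).homeoOfEquivCompactToT2
    have hg : g = (fun v : ChainSpace g 1 => v.1 0) ∘ e.symm := by
      rw [proj_zero_eq_iterate_comp]
      ext w
      exact congrArg g (e.apply_symm_apply w).symm
    rw [hg]
    exact hcov.isLocalHomeomorph.comp e.symm.isLocalHomeomorph

/-- `g` is a local homeomorphism iff each projection `π₀^N : V(N,g) → V` is a
finite-to-one covering map. -/
theorem stmt3 {V : Type*} [MetricSpace V] [CompactSpace V]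
    (g : V → V) (hsurj : Function.Surjective g) :
    IsLocalHomeomorph g ↔
      ∀ N : ℕ,
        IsCoveringMap
          (fun v : {v : Fin (N + 1) → V // ∀ i : Fin N, g (v i.succ) = v i.castSucc} =>
            v.val 0) ∧
        ∀ b : V,
          {v : {v : Fin (N + 1) → V // ∀ i : Fin N, g (v i.succ) = v i.castSucc} |
            v.val 0 = b}.Finite :=
  stmt3_general g
end

section
/- Let g : V → V be a surjective local homeomorphism on a compact metric space and let R_g := { (x, n, y) ∈ V × ℤ × V : ∃ k ∈ ℕ with n + k ≥ 0 and g^{n+k}(x) = g^k(y) } be the Deaconu–Renault groupoid. Define κ : R_g → ℕ by κ(x, n, y) := min { k ∈ ℕ : n + k ≥ 0 and g^{n+k}(x) = g^k(y) }. Then for every (x, n, y) ∈ R_g with n + κ(x,n,y) > 0 (i.e. g(x) and n−1 make sense), one has |ψ(n, κ(x,n,y)) − ψ(n−1, κ(g(x), n−1, y))| ≤ 2, where ψ(n, k) := n if k = 0 and ψ(n, k) := −|n| − k if k > 0. -/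
/-- The set of `k` witnessing that `(x,n,y)` lies in the Deaconu–Renault groupoid `R_g`. -/
def kappaSet {V : Type*} (g : V → V) (x : V) (n : ℤ) (y : V) : Set ℕ :=
  {k : ℕ | 0 ≤ n + (k : ℤ) ∧ g^[(n + (k : ℤ)).toNat] x = g^[k] y}

/-- The function `κ(x,n,y) = min{k : g^{n+k}(x) = g^k(y)}`. -/
noncomputable def kappa {V : Type*} (g : V → V) (x : V) (n : ℤ) (y : V) : ℕ :=
  sInf (kappaSet g x n y)

/-- `ψ(n,0) = n` and `ψ(n,k) = -|n| - k` for `k > 0`. -/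
def psi (n : ℤ) (k : ℕ) : ℤ := if k = 0 then n else -|n| - (k : ℤ)

/-- The commutator bound: `|ψ(n,κ(x,n,y)) - ψ(n-1,κ(g(x),n-1,y))| ≤ 2`. -/
theorem stmt7 {V : Type*} [MetricSpace V] [CompactSpace V] (g : V → V)
    (hloc : IsLocalHomeomorph g) (hsurj : Function.Surjective g)
    (x : V) (n : ℤ) (y : V) (hmem : (kappaSet g x n y).Nonempty)
    (hpos : 0 < n + (kappa g x n y : ℤ)) :
    |psi n (kappa g x n y) - psi (n - 1) (kappa g (g x) (n - 1) y)| ≤ 2 := by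
  set κ := kappa g x n y with hκ
  have hκmem : κ ∈ kappaSet g x n y := Nat.sInf_mem hmem
  -- κ is also a witness for (g x, n-1, y)
  have hstep : ∀ m : ℕ, 0 < n + (m : ℤ) →
      g^[(n + (m : ℤ)).toNat] x = g^[(n - 1 + (m : ℤ)).toNat] (g x) := by
    intro m hm
    have h1 : (n + (m : ℤ)).toNat = (n - 1 + (m : ℤ)).toNat + 1 := by omega
    rw [h1, Function.iterate_succ_apply]
  have hκmem' : κ ∈ kappaSet g (g x) (n - 1) y := by
    refine ⟨by omega, ?_⟩
    rw [← hstep κ hpos]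
    exact hκmem.2
  have heq : kappa g (g x) (n - 1) y = κ := by
    apply le_antisymm (Nat.sInf_le hκmem')
    have hmem2 : kappa g (g x) (n - 1) y ∈ kappaSet g (g x) (n - 1) y :=
      Nat.sInf_mem ⟨κ, hκmem'⟩
    obtain ⟨h1, h2⟩ := hmem2
    have hm : kappa g (g x) (n - 1) y ∈ kappaSet g x n y :=
      ⟨by omega, by rw [hstep _ (by omega)]; exact h2⟩
    exact Nat.sInf_le hm
  rw [heq]
  unfold psi
  rcases Nat.eq_zero_or_pos κ with h | h
  · simp [h]
  · have hne : κ ≠ 0 := h.ne'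
    simp only [hne, if_false]
    rcases abs_cases n with ⟨h1, h2⟩ | ⟨h1, h2⟩ <;>
      rcases abs_cases (n - 1) with ⟨h3, h4⟩ | ⟨h3, h4⟩ <;>
      rw [h1, h3, abs_le] <;> omega
end
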